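/- Let X be a connected simple graph with vertex set V, let F be a family of cuts of X, and let A be a cut belonging to the Boolean subalgebra of subsets of V generated by F (the smallest family containing F together with ∅ and V and closed under union, intersection and complement). If A separates x and y, where x, y ∈ V ∪ ΩX are each a vertex or an end of X, then some B ∈ F separates x and y. -/

import Mathlib

open Classical

/-- The set of edges of `G` with one endpoint in `A` and one in the complement of `A`. -/
def cutEdges {V : Type*} (G : SimpleGraph V) (A : Set V) : Set (Sym2 V) :=
  {e | e ∈ G.edgeSet ∧ ∃ u v, e = s(u, v) ∧ u ∈ A ∧ v ∉ A}

/-- The capacity of a cut: the sum of the capacities of the edges across it. -/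
noncomputable def cutCap {V : Type*} (G : SimpleGraph V) (c : Sym2 V → ℕ) (A : Set V) : ℕ :=
  ∑ᶠ e ∈ cutEdges G A, c e

/-- An end `ω` of `G` lies in the set `A` if the component determined by `ω` outside some
finite vertex set is contained in `A`. -/
def EndIn {V : Type*} (G : SimpleGraph V) (ω : ↥G.end) (A : Set V) : Prop :=
  ∃ K : Finset V, (ω.val (Opposite.op K)).supp ⊆ A

/-- An element of `V ∪ ΩX` (a vertex or an end) lies in `A`. -/
def LiesIn {V : Type*} (G : SimpleGraph V) (x : V ⊕ ↥G.end) (A : Set V) : Prop :=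
  match x with
  | Sum.inl v => v ∈ A
  | Sum.inr ω => EndIn G ω A

/-- A cut `A` separates `x` and `y`, each a vertex or an end. -/
def Separates {V : Type*} (G : SimpleGraph V) (A : Set V) (x y : V ⊕ ↥G.end) : Prop :=
  (LiesIn G x A ∧ LiesIn G y Aᶜ) ∨ (LiesIn G y A ∧ LiesIn G x Aᶜ)

/-- A cut: a nonempty proper subset of the vertices with finite edge boundary. -/
def IsCut {V : Type*} (G : SimpleGraph V) (A : Set V) : Prop :=
  A ≠ ∅ ∧ A ≠ Set.univ ∧ (cutEdges G A).Finite

/-- Membership in the Boolean subalgebra of `Set V` generated by a family `F`. -/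
inductive BoolGen {V : Type*} (F : Set (Set V)) : Set V → Prop
  | base {A : Set V} : A ∈ F → BoolGen F A
  | empty : BoolGen F ∅
  | univ : BoolGen F Set.univ
  | union {A B : Set V} : BoolGen F A → BoolGen F B → BoolGen F (A ∪ B)
  | inter {A B : Set V} : BoolGen F A → BoolGen F B → BoolGen F (A ∩ B)
  | compl {A : Set V} : BoolGen F A → BoolGen F Aᶜ

/-!
For a set `C` of vertices with finitely many boundary edges, every vertex and every end lies in
exactly one of `C` and `Cᶜ`, and "`x` lies in `C`" commutes with union, intersection and
complement. Hence the sets with finite boundary that do not separate `x` from `y` form a Boolean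
algebra; if no member of `F` separates them, it contains `F`, hence also `A`.
-/

open SimpleGraph Opposite

namespace SimpleGraph.ComponentCompl

variable {V : Type*} {G : SimpleGraph V} {K : Set V}

theorem subset_or_subset_compl (C : Set V)
    (hC : ∀ ⦃u v⦄, u ∉ K → v ∉ K → G.Adj u v → (u ∈ C ↔ v ∈ C)) (D : G.ComponentCompl K) :
    (D : Set V) ⊆ C ∨ (D : Set V) ⊆ Cᶜ := by
  let inC : G.ComponentCompl K → Prop :=
    ComponentCompl.lift (fun v _ => v ∈ C) fun _ _ hu hv huv => propext (hC hu hv huv)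
  by_cases hD : inC D
  · left
    rintro w ⟨_, rfl⟩
    exact hD
  · right
    rintro w ⟨_, rfl⟩
    exact hD

end SimpleGraph.ComponentCompl

section Ends

variable {V : Type*} {G : SimpleGraph V}

theorem end_supp_subset_of_le (ω : ↥G.end) {K L : Finset V} (h : K ≤ L) :
    (ω.val (op L)).supp ⊆ (ω.val (op K)).supp := by
  have hcompat := ω.prop (CategoryTheory.homOfLE h).op
  simp only [componentComplFunctor_map] at hcompat
  rw [← hcompat]
  exact ComponentCompl.subset_hom _ (by exact_mod_cast h)

theorem EndIn.mono {ω : ↥G.end} {A B : Set V} (h : EndIn G ω A) (hAB : A ⊆ B) :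
    EndIn G ω B :=
  let ⟨K, hK⟩ := h
  ⟨K, hK.trans hAB⟩

theorem EndIn.inter {ω : ↥G.end} {A B : Set V} (hA : EndIn G ω A) (hB : EndIn G ω B) :
    EndIn G ω (A ∩ B) := by
  obtain ⟨K, hK⟩ := hA
  obtain ⟨L, hL⟩ := hB
  exact ⟨K ∪ L, Set.subset_inter ((end_supp_subset_of_le ω le_sup_left).trans hK)
    ((end_supp_subset_of_le ω le_sup_right).trans hL)⟩

theorem not_endIn_empty (ω : ↥G.end) : ¬ EndIn G ω ∅ := by
  rintro ⟨K, hK⟩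
  obtain ⟨v, hv⟩ := (ω.val (op K)).nonempty
  exact hK hv

theorem endIn_univ (ω : ↥G.end) : EndIn G ω Set.univ :=
  ⟨∅, Set.subset_univ _⟩

theorem EndIn.not_compl {ω : ↥G.end} {A : Set V} (hA : EndIn G ω A) : ¬ EndIn G ω Aᶜ :=
  fun hAc => not_endIn_empty ω (by simpa using hA.inter hAc)

/-- `K` is the finite set of endpoints of edges across `C`: off `K`, no edge joins `C` to `Cᶜ`. -/
theorem endIn_or_endIn_compl (ω : ↥G.end) {C : Set V} (hfin : (cutEdges G C).Finite) :
    EndIn G ω C ∨ EndIn G ω Cᶜ := by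
  set K : Finset V := hfin.toFinset.biUnion Sym2.toFinset
  have hC : ∀ ⦃u v⦄, u ∉ (K : Set V) → v ∉ (K : Set V) → G.Adj u v → (u ∈ C ↔ v ∈ C) := by
    intro u v hu hv huv
    have hK : ∀ {a b}, G.Adj a b → a ∈ C → b ∉ C → a ∈ K := fun hab ha hb =>
      Finset.mem_biUnion.mpr ⟨_, hfin.mem_toFinset.mpr ⟨hab, _, _, rfl, ha, hb⟩,
        Sym2.mem_toFinset.mpr (Sym2.mem_mk_left _ _)⟩
    constructor
    · exact fun huC => by_contra fun hvC => hu (hK huv huC hvC)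
    · exact fun hvC => by_contra fun huC => hv (hK huv.symm hvC huC)
  exact (ComponentCompl.subset_or_subset_compl C hC (ω.val (op K))).imp (⟨K, ·⟩) (⟨K, ·⟩)

end Ends

section Cuts

variable {V : Type*} {G : SimpleGraph V}

theorem cutEdges_compl (A : Set V) : cutEdges G Aᶜ = cutEdges G A := by
  ext e
  constructor <;> rintro ⟨he, u, v, rfl, hu, hv⟩
  · exact ⟨he, v, u, Sym2.eq_swap, not_not.mp hv, hu⟩
  · exact ⟨he, v, u, Sym2.eq_swap, hv, fun h => h hu⟩

theorem cutEdges_union_subset (A B : Set V) :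
    cutEdges G (A ∪ B) ⊆ cutEdges G A ∪ cutEdges G B := by
  rintro e ⟨he, u, v, rfl, hu | hu, hv⟩
  · exact Or.inl ⟨he, u, v, rfl, hu, fun h => hv (Or.inl h)⟩
  · exact Or.inr ⟨he, u, v, rfl, hu, fun h => hv (Or.inr h)⟩

theorem cutEdges_inter_subset (A B : Set V) :
    cutEdges G (A ∩ B) ⊆ cutEdges G A ∪ cutEdges G B := by
  rintro e ⟨he, u, v, rfl, hu, hv⟩
  rcases not_and_or.mp hv with hv | hv
  · exact Or.inl ⟨he, u, v, rfl, hu.1, hv⟩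
  · exact Or.inr ⟨he, u, v, rfl, hu.2, hv⟩

theorem BoolGen.finite_cutEdges {F : Set (Set V)} (hF : ∀ B ∈ F, (cutEdges G B).Finite)
    {C : Set V} (hC : BoolGen F C) : (cutEdges G C).Finite := by
  induction hC with
  | base hB => exact hF _ hB
  | empty => simp [cutEdges]
  | univ => simp [cutEdges]
  | union _ _ hA hB => exact (hA.union hB).subset (cutEdges_union_subset _ _)
  | inter _ _ hA hB => exact (hA.union hB).subset (cutEdges_inter_subset _ _)
  | compl _ hA => rwa [cutEdges_compl]

end Cuts

section LiesIn

variable {V : Type*} {G : SimpleGraph V}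

theorem not_liesIn_empty (x : V ⊕ ↥G.end) : ¬ LiesIn G x ∅ := by
  cases x with
  | inl v => exact id
  | inr ω => exact not_endIn_empty ω

theorem liesIn_univ (x : V ⊕ ↥G.end) : LiesIn G x Set.univ := by
  cases x with
  | inl v => trivial
  | inr ω => exact endIn_univ ω

theorem liesIn_inter_iff (x : V ⊕ ↥G.end) {A B : Set V} :
    LiesIn G x (A ∩ B) ↔ LiesIn G x A ∧ LiesIn G x B := by
  cases x with
  | inl v => rfl
  | inr ω =>
    exact ⟨fun h => ⟨h.mono Set.inter_subset_left, h.mono Set.inter_subset_right⟩,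
      fun ⟨hA, hB⟩ => hA.inter hB⟩

theorem liesIn_compl_iff (x : V ⊕ ↥G.end) {A : Set V} (hA : (cutEdges G A).Finite) :
    LiesIn G x Aᶜ ↔ ¬ LiesIn G x A := by
  cases x with
  | inl v => rfl
  | inr ω => exact ⟨fun hAc h => h.not_compl hAc, (endIn_or_endIn_compl ω hA).resolve_left⟩

theorem liesIn_union_iff (x : V ⊕ ↥G.end) {A B : Set V} (hA : (cutEdges G A).Finite)
    (hB : (cutEdges G B).Finite) :
    LiesIn G x (A ∪ B) ↔ LiesIn G x A ∨ LiesIn G x B := by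
  have hAB : (cutEdges G (Aᶜ ∩ Bᶜ)).Finite := by
    refine (hA.union hB).subset ?_
    simpa only [cutEdges_compl] using cutEdges_inter_subset (G := G) Aᶜ Bᶜ
  rw [← compl_compl (A ∪ B), Set.compl_union, liesIn_compl_iff x hAB, liesIn_inter_iff,
    liesIn_compl_iff x hA, liesIn_compl_iff x hB]
  tauto

theorem separates_iff_not_iff {A : Set V} (hA : (cutEdges G A).Finite) (x y : V ⊕ ↥G.end) :
    Separates G A x y ↔ ¬ (LiesIn G x A ↔ LiesIn G y A) := by
  rw [Separates, liesIn_compl_iff x hA, liesIn_compl_iff y hA]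
  tauto

theorem BoolGen.liesIn_iff_of_forall_mem {F : Set (Set V)}
    (hF : ∀ B ∈ F, (cutEdges G B).Finite) {x y : V ⊕ ↥G.end}
    (hxy : ∀ B ∈ F, LiesIn G x B ↔ LiesIn G y B) {C : Set V} (hC : BoolGen F C) :
    LiesIn G x C ↔ LiesIn G y C := by
  induction hC with
  | base hB => exact hxy _ hB
  | empty => exact iff_of_false (not_liesIn_empty x) (not_liesIn_empty y)
  | univ => exact iff_of_true (liesIn_univ x) (liesIn_univ y)
  | union hA hB ihA ihB =>
    rw [liesIn_union_iff x (hA.finite_cutEdges hF) (hB.finite_cutEdges hF),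
      liesIn_union_iff y (hA.finite_cutEdges hF) (hB.finite_cutEdges hF), ihA, ihB]
  | inter _ _ ihA ihB => rw [liesIn_inter_iff, liesIn_inter_iff, ihA, ihB]
  | compl hA ihA =>
    rw [liesIn_compl_iff x (hA.finite_cutEdges hF), liesIn_compl_iff y (hA.finite_cutEdges hF),
      ihA]

end LiesIn

theorem separation_from_generators_general {V : Type*} (G : SimpleGraph V)
    (F : Set (Set V)) (hF : ∀ B ∈ F, IsCut G B)
    (A : Set V) (hAgen : BoolGen F A)
    (x y : V ⊕ ↥G.end) (hsep : Separates G A x y) :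
    ∃ B ∈ F, Separates G B x y := by
  have hfin : ∀ B ∈ F, (cutEdges G B).Finite := fun B hB => (hF B hB).2.2
  by_contra! hno
  have hxy : ∀ B ∈ F, LiesIn G x B ↔ LiesIn G y B := fun B hB =>
    not_not.mp ((separates_iff_not_iff (hfin B hB) x y).not.mp (hno B hB))
  exact (separates_iff_not_iff (hAgen.finite_cutEdges hfin) x y).mp hsep
    (hAgen.liesIn_iff_of_forall_mem hfin hxy)

/-- If a cut `A` in the Boolean subalgebra generated by a family `F` of cuts separates
`x` and `y` (each a vertex or an end), then some `B ∈ F` separates `x` and `y`. -/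
theorem separation_from_generators {V : Type*} (G : SimpleGraph V) (hG : G.Connected)
    (F : Set (Set V)) (hF : ∀ B ∈ F, IsCut G B)
    (A : Set V) (hAcut : IsCut G A) (hAgen : BoolGen F A)
    (x y : V ⊕ ↥G.end) (hsep : Separates G A x y) :
    ∃ B ∈ F, Separates G B x y :=
  separation_from_generators_general G F hF A hAgen x y hsep
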